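/- Suppose H(σ > θ) = a√(π/2)·log(1/θ) + O(1) as θ ↓ 0, and Φ(λ) = ∫₀¹ H(σ > (−log t)/λ) dt with the contribution from t < e^{−λd} bounded. Then Φ(λ)/(a√(π/2) log λ) → 1 as λ → ∞. -/

import Mathlib

open MeasureTheory Filter Set Real Asymptotics

/-!
Substitute `θ = -log t / λ`. For `t ∈ (e^{-λd}, 1)` we have `θ ∈ (0, d)`, so there
`f θ = b (log λ - log (-log t)) + O(1)` with `b = a√(π/2)`. Since `log (-log t)` is integrable
on `(0, 1)` and `e^{-λd} log λ` is bounded, integrating over `(e^{-λd}, 1)` gives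
`b log λ + O(1)`; the remaining piece over `(0, e^{-λd})` is bounded by hypothesis.
Hence `Φ(λ) = b log λ + O(1)`, which is `Φ(λ) ∼ b log λ` because `log λ → ∞`.
-/

lemma neg_log_le_two_mul_rpow {x : ℝ} (hx : 0 < x) : -log x ≤ 2 * x ^ (-(1 / 2) : ℝ) := by
  have h := log_le_rpow_div (inv_nonneg.2 hx.le) (by norm_num : (0 : ℝ) < 1 / 2)
  rw [log_inv, inv_rpow hx.le, ← rpow_neg hx.le] at h
  linarith

lemma abs_log_le_two_mul_rpow_add {x : ℝ} (hx : 0 < x) :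
    |log x| ≤ 2 * x ^ (-(1 / 2) : ℝ) + x := by
  have hpow : 0 ≤ x ^ (-(1 / 2) : ℝ) := rpow_nonneg hx.le _
  rw [abs_le]
  constructor
  · linarith [neg_log_le_two_mul_rpow hx]
  · linarith [log_le_sub_one_of_pos hx]

lemma abs_log_neg_log_le {t : ℝ} (ht : t ∈ Ioo (0 : ℝ) 1) :
    |log (-log t)| ≤ 2 * (1 - t) ^ (-(1 / 2) : ℝ) + 2 * t ^ (-(1 / 2) : ℝ) := by
  have h1t : 0 < 1 - t := by linarith [ht.2]
  have hu : 1 - t ≤ -log t := by linarith [log_le_sub_one_of_pos ht.1]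
  calc |log (-log t)| ≤ 2 * (-log t) ^ (-(1 / 2) : ℝ) + -log t :=
        abs_log_le_two_mul_rpow_add (h1t.trans_le hu)
    _ ≤ 2 * (1 - t) ^ (-(1 / 2) : ℝ) + 2 * t ^ (-(1 / 2) : ℝ) :=
        add_le_add (mul_le_mul_of_nonneg_left (rpow_le_rpow_of_nonpos h1t hu (by norm_num))
          zero_le_two) (neg_log_le_two_mul_rpow ht.1)

lemma integrableOn_log_neg_log : IntegrableOn (fun t => log (-log t)) (Ioo (0 : ℝ) 1) := by
  have hdom : IntegrableOn
      (fun t : ℝ => 2 * (1 - t) ^ (-(1 / 2) : ℝ) + 2 * t ^ (-(1 / 2) : ℝ)) (Ioo 0 1) := by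
    rw [← intervalIntegrable_iff_integrableOn_Ioo_of_le zero_le_one]
    have hpow := intervalIntegral.intervalIntegrable_rpow' (r := -(1 / 2)) (a := 0) (b := 1)
      (by norm_num)
    have hreflect := hpow.comp_sub_left 1
    simp only [sub_zero, sub_self] at hreflect
    exact (hreflect.symm.const_mul 2).add (hpow.const_mul 2)
  refine hdom.integrable.mono'
    (measurable_log.comp measurable_log.neg).aestronglyMeasurable ?_
  filter_upwards [ae_restrict_mem measurableSet_Ioo] with t ht
  exact (norm_eq_abs _).trans_le (abs_log_neg_log_le ht)

lemma log_mul_exp_neg_mul_le {d l : ℝ} (hd : 0 < d) (hl : 1 ≤ l) :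
    log l * exp (-(l * d)) ≤ 1 / d := by
  have hld : l * d * exp (-(l * d)) ≤ 1 :=
    (mul_exp_neg_le_exp_neg_one _).trans (exp_le_one_iff.2 (by norm_num))
  rw [le_div_iff₀ hd]
  calc log l * exp (-(l * d)) * d ≤ l * exp (-(l * d)) * d := by
        gcongr
        linarith [log_le_sub_one_of_pos (zero_lt_one.trans_le hl)]
    _ = l * d * exp (-(l * d)) := by ring
    _ ≤ 1 := hld

lemma setIntegral_Ioo_sub_log_neg_log {ε : ℝ} (hε : ε ∈ Ioo (0 : ℝ) 1) (c : ℝ) :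
    ∫ t in Ioo ε 1, (c - log (-log t)) = c * (1 - ε) - ∫ t in Ioo ε 1, log (-log t) := by
  rw [integral_sub (integrableOn_const (C := c) measure_Ioo_lt_top.ne)
    (integrableOn_log_neg_log.mono_set (Ioo_subset_Ioo_left hε.1.le)), setIntegral_const,
    volume_real_Ioo_of_le hε.2.le, smul_eq_mul, mul_comm]

section

variable {f : ℝ → ℝ} {b C d l M : ℝ}

lemma abs_comp_neg_log_div_sub_le
    (hbd : ∀ θ ∈ Ioo (0 : ℝ) d, |f θ - b * log (1 / θ)| ≤ C) (hl : 0 < l) {t : ℝ}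
    (ht : t ∈ Ioo (exp (-(l * d))) 1) :
    |f (-log t / l) - b * (log l - log (-log t))| ≤ C := by
  have ht0 : 0 < t := (exp_pos _).trans ht.1
  have hlog_pos : 0 < -log t := neg_pos.2 (log_neg ht0 ht.2)
  have hlog_lt : -log t < l * d := by
    have := log_lt_log (exp_pos _) ht.1
    rw [log_exp] at this
    linarith
  have hθ : -log t / l ∈ Ioo 0 d :=
    ⟨div_pos hlog_pos hl, (div_lt_iff₀ hl).2 (by linarith)⟩
  have hlog_inv : log (1 / (-log t / l)) = log l - log (-log t) := by
    rw [one_div_div, log_div hl.ne' hlog_pos.ne']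
  simpa only [hlog_inv] using hbd _ hθ

lemma abs_setIntegral_Ioo_exp_sub_le
    (hbd : ∀ θ ∈ Ioo (0 : ℝ) d, |f θ - b * log (1 / θ)| ≤ C) (hl : 0 < l) (hd : 0 < d)
    (hF : IntegrableOn (fun t => f (-log t / l)) (Ioo (exp (-(l * d))) 1)) :
    |(∫ t in Ioo (exp (-(l * d))) 1, f (-log t / l))
      - b * (log l * (1 - exp (-(l * d))) - ∫ t in Ioo (exp (-(l * d))) 1, log (-log t))|
      ≤ |C| := by
  set ε := exp (-(l * d))
  have hε : ε ∈ Ioo 0 1 := ⟨exp_pos _, exp_lt_one_iff.2 (by nlinarith)⟩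
  have hfin : volume (Ioo ε 1) < ⊤ := measure_Ioo_lt_top
  have hG : IntegrableOn (fun t => b * (log l - log (-log t))) (Ioo ε 1) :=
    ((integrableOn_const hfin.ne).sub
      (integrableOn_log_neg_log.mono_set (Ioo_subset_Ioo_left hε.1.le))).const_mul b
  rw [← setIntegral_Ioo_sub_log_neg_log hε, ← integral_const_mul, ← integral_sub hF hG,
    ← Real.norm_eq_abs]
  calc _ ≤ C * volume.real (Ioo ε 1) := norm_setIntegral_le_of_norm_le_const hfin
        fun t ht => abs_comp_neg_log_div_sub_le hbd hl ht
    _ ≤ |C| * 1 := by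
        rw [volume_real_Ioo_of_le hε.2.le]
        exact mul_le_mul (le_abs_self C) (by linarith [hε.1]) (by linarith [hε.2]) (abs_nonneg C)
    _ = |C| := mul_one _

lemma abs_integral_comp_neg_log_div_sub_le (hf0 : ∀ θ, 0 ≤ f θ)
    (hbd : ∀ θ ∈ Ioo (0 : ℝ) d, |f θ - b * log (1 / θ)| ≤ C) (hd : 0 < d) (hl : 1 ≤ l)
    (hint : IntegrableOn (fun t => f (-log t / l)) (Ioo 0 1))
    (htail : ∫ t in Ioo 0 (exp (-(l * d))), f (-log t / l) ≤ M) :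
    |(∫ t in Ioo 0 1, f (-log t / l)) - b * log l|
      ≤ M + |C| + |b| / d + |b| * ∫ t in Ioo 0 1, |log (-log t)| := by
  have hl0 : 0 < l := zero_lt_one.trans_le hl
  set ε := exp (-(l * d))
  have hε : ε ∈ Ioo 0 1 := ⟨exp_pos _, exp_lt_one_iff.2 (by nlinarith)⟩
  have hsplit : ∫ t in Ioo 0 1, f (-log t / l)
      = (∫ t in Ioo 0 ε, f (-log t / l)) + ∫ t in Ioo ε 1, f (-log t / l) := by
    rw [← integral_Ioc_eq_integral_Ioo (y := ε), ← setIntegral_union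
      (Ioc_disjoint_Ioi_same.mono_right Ioo_subset_Ioi_self) measurableSet_Ioo
      (hint.mono_set (Ioc_subset_Ioo_right hε.2)) (hint.mono_set (Ioo_subset_Ioo_left hε.1.le)),
      Ioc_union_Ioo_eq_Ioo hε.1.le hε.2]
  have htail_nonneg : 0 ≤ ∫ t in Ioo 0 ε, f (-log t / l) :=
    setIntegral_nonneg measurableSet_Ioo fun _ _ => hf0 _
  have hmain := abs_setIntegral_Ioo_exp_sub_le hbd hl0 hd
    (hint.mono_set (Ioo_subset_Ioo_left hε.1.le))
  have hcorr : |b * (log l * ε)| ≤ |b| / d := by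
    rw [abs_mul, abs_of_nonneg (mul_nonneg (log_nonneg hl) hε.1.le), ← mul_one_div]
    exact mul_le_mul_of_nonneg_left (log_mul_exp_neg_mul_le hd hl) (abs_nonneg b)
  have hloglog :
      |b * ∫ t in Ioo ε 1, log (-log t)| ≤ |b| * ∫ t in Ioo 0 1, |log (-log t)| := by
    rw [abs_mul]
    refine mul_le_mul_of_nonneg_left (abs_integral_le_integral_abs.trans ?_) (abs_nonneg b)
    exact setIntegral_mono_set integrableOn_log_neg_log.abs
      (Eventually.of_forall fun _ => abs_nonneg _) (Ioo_subset_Ioo_left hε.1.le).eventuallyLE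
  -- `Φ - b log l = tail + (error on (ε, 1)) - b ε log l - b ∫_ε^1 log (-log t)`
  rw [hsplit, abs_le]
  rw [abs_le] at hmain hcorr hloglog
  constructor <;> linarith

end

/-- If `f(θ) = a√(π/2) log(1/θ) + O(1)` near `0`, `f ≥ 0`, and the contribution to
`∫₀¹ f((-log t)/λ) dt` from `t < e^{-λ d}` is bounded uniformly in `λ`, then
`∫₀¹ f((-log t)/λ) dt ∼ a√(π/2) log λ` as `λ → ∞`. -/
theorem stmt17 (a : ℝ) (ha : 0 < a) (f : ℝ → ℝ) (hf0 : ∀ θ : ℝ, 0 ≤ f θ)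
    (C d : ℝ) (hd : 0 < d)
    (hbd : ∀ θ ∈ Ioo (0:ℝ) d, |f θ - a * Real.sqrt (π / 2) * Real.log (1 / θ)| ≤ C)
    (hint : ∀ l : ℝ, 1 ≤ l → IntegrableOn (fun t => f (-Real.log t / l)) (Ioo (0:ℝ) 1))
    (M : ℝ)
    (htail : ∀ l : ℝ, 1 ≤ l →
      (∫ t in Ioo (0:ℝ) (Real.exp (-(l * d))), f (-Real.log t / l)) ≤ M) :
    Tendsto (fun l : ℝ =>
        (∫ t in Ioo (0:ℝ) 1, f (-Real.log t / l)) / (a * Real.sqrt (π / 2) * Real.log l))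
      atTop (nhds 1) := by
  set b := a * √(π / 2)
  have hb : 0 < b := by positivity
  have hbounded : (fun l => (∫ t in Ioo 0 1, f (-log t / l)) - b * log l)
      =O[atTop] (fun _ => (1 : ℝ)) :=
    (isBigO_one_iff ℝ).2 (isBoundedUnder_of_eventually_le ((eventually_ge_atTop 1).mono
      fun l hl => abs_integral_comp_neg_log_div_sub_le hf0 hbd hd hl (hint l hl) (htail l hl)))
  have hlog : Tendsto (fun l => b * log l) atTop atTop := tendsto_log_atTop.const_mul_atTop hb
  have hone : (fun _ => (1 : ℝ)) =o[atTop] fun l => b * log l :=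
    (isLittleO_one_left_iff ℝ).2 (tendsto_norm_atTop_atTop.comp hlog)
  have hequiv : (fun l => ∫ t in Ioo 0 1, f (-log t / l)) ~[atTop] fun l => b * log l :=
    (hbounded.trans_isLittleO hone).isEquivalent
  exact (isEquivalent_iff_tendsto_one (hlog.eventually_ne_atTop 0)).1 hequiv
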